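/- arXiv:1705.04659 — 7 statements merged into one kernel-verified Lean document; each statement's English description precedes it below -/
import Mathlib

section
/- In a weakly presentable poset, every nonempty subset X has a supremum, given by the supremum of the union of the sets of minimal elements below each element of X. -/
/-- The set of supercompacts (minimal elements) below `x`. -/
def Scpt {A : Type*} [PartialOrder A] (x : A) : Set A := {s | IsMin s ∧ s ≤ x}

/-- A poset is weakly presentable if every nonempty set of minimal elements has a
supremum, and every element is the supremum of the minimal elements below it. -/
def WeaklyPresentable (A : Type*) [PartialOrder A] : Prop :=
  (∀ S : Set A, S.Nonempty → (∀ s ∈ S, IsMin s) → ∃ b, IsLUB S b) ∧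
  (∀ x : A, IsLUB (Scpt x) x)

/-- Order-theoretic compactness: `x ≤ sup Y` implies `x ≤ y` for some `y ∈ Y`,
for every nonempty `Y` having a supremum. -/
def OrdCompact {A : Type*} [PartialOrder A] (x : A) : Prop :=
  ∀ Y : Set A, Y.Nonempty → ∀ b : A, IsLUB Y b → x ≤ b → ∃ y ∈ Y, x ≤ y

/-- A pointed poset is presentable if it is weakly presentable, the basepoint is
minimal, and every minimal element is compact. -/
structure IsPresentablePoset (A : Type*) [PartialOrder A] (p : A) : Prop where
  weakly : WeaklyPresentable A
  basepoint_min : IsMin p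
  min_compact : ∀ s : A, IsMin s → OrdCompact s
/-- In a weakly presentable poset, every nonempty subset `X` has a supremum,
given by the supremum of the union of the sets of minimal elements below each
element of `X`. -/
theorem stmt_0 {A : Type*} [PartialOrder A] (h : WeaklyPresentable A)
    (X : Set A) (hX : X.Nonempty) :
    ∃ b : A, IsLUB X b ∧ IsLUB (⋃ x ∈ X, Scpt x) b := by
  obtain ⟨x0, hx0⟩ := hX
  set S : Set A := ⋃ x ∈ X, Scpt x with hS
  -- Scpt x0 is nonempty
  have hne : (Scpt x0).Nonempty := by
    by_contra hemp
    rw [Set.not_nonempty_iff_eq_empty] at hemp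
    have hlub := (h.2 x0)
    rw [hemp] at hlub
    have hleast : ∀ y : A, x0 ≤ y := fun y => hlub.2 (by simp [upperBounds])
    have hmin : IsMin x0 := fun y _ => hleast y
    have : x0 ∈ Scpt x0 := ⟨hmin, le_refl _⟩
    rw [hemp] at this
    exact this
  have hSne : S.Nonempty := by
    obtain ⟨s, hs⟩ := hne
    exact ⟨s, Set.mem_biUnion hx0 hs⟩
  have hSmin : ∀ s ∈ S, IsMin s := by
    intro s hs
    obtain ⟨x, _, hmem⟩ := Set.mem_iUnion₂.mp hs
    exact hmem.1
  obtain ⟨b, hb⟩ := h.1 S hSne hSmin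
  refine ⟨b, ⟨⟨?_, ?_⟩, hb⟩⟩
  · intro x hx
    have : x ∈ upperBounds (Scpt x) → x ≤ b → True := fun _ _ => trivial
    have hsub : Scpt x ⊆ S := fun s hs => Set.mem_biUnion hx hs
    exact (h.2 x).2 (fun s hs => hb.1 (hsub hs))
  · intro c hc
    refine hb.2 fun s hs => ?_
    obtain ⟨x, hxX, hmem⟩ := Set.mem_iUnion₂.mp hs
    exact hmem.2.trans (hc hxX)
end

section
/- Let A be a weakly presentable poset. The following are equivalent: (i) every minimal element of A is compact; (ii) for every x in A, if x = sup S for some set S of minimal elements, then S equals the set of all minimal elements below x. -/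
/-- In a weakly presentable poset, every minimal element is compact iff
whenever `x` is the supremum of a (nonempty) set `S` of minimal elements,
`S` is the set of all minimal elements below `x`. -/
theorem stmt_2 {A : Type*} [PartialOrder A] (h : WeaklyPresentable A) :
    (∀ s : A, IsMin s → OrdCompact s) ↔
      (∀ (x : A) (S : Set A), S.Nonempty → (∀ s ∈ S, IsMin s) → IsLUB S x →
        S = Scpt x) := by
  constructor
  · intro hc x S hne hmin hlub
    apply Set.Subset.antisymm
    · intro s hs
      exact ⟨hmin s hs, hlub.1 hs⟩
    · rintro s ⟨hsmin, hsx⟩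
      obtain ⟨y, hyS, hsy⟩ := hc s hsmin S hne x hlub hsx
      have : y ≤ s := hmin y hyS hsy
      rw [le_antisymm hsy this]; exact hyS
  · intro H s hsmin Y hYne b hlub hsb
    -- T = union of Scpt y over y ∈ Y
    set T : Set A := ⋃ y ∈ Y, Scpt y with hT
    have hScpt_ne : ∀ y : A, (Scpt y).Nonempty := by
      intro y
      by_contra hempty
      rw [Set.not_nonempty_iff_eq_empty] at hempty
      have := h.2 y
      rw [hempty] at this
      have hymin : IsMin y := by
        intro a ha
        exact this.2 (by simp [lowerBounds])
      have : y ∈ Scpt y := ⟨hymin, le_refl y⟩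
      simp [hempty] at this
    have hTne : T.Nonempty := by
      obtain ⟨y, hy⟩ := hYne
      obtain ⟨t, ht⟩ := hScpt_ne y
      exact ⟨t, Set.mem_biUnion hy ht⟩
    have hTmin : ∀ t ∈ T, IsMin t := by
      intro t ht
      obtain ⟨y, hy, ht'⟩ := Set.mem_iUnion₂.mp ht
      exact ht'.1
    have hTlub : IsLUB T b := by
      constructor
      · intro t ht
        obtain ⟨y, hy, ht'⟩ := Set.mem_iUnion₂.mp ht
        exact ht'.2.trans (hlub.1 hy)
      · intro c hc
        apply hlub.2
        intro y hy
        exact (h.2 y).2 (fun t ht => hc (Set.mem_biUnion hy ht))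
    have heq := H b T hTne hTmin hTlub
    have : s ∈ T := by rw [heq]; exact ⟨hsmin, hsb⟩
    obtain ⟨y, hy, hsy⟩ := Set.mem_iUnion₂.mp this
    exact ⟨y, hy, hsy.2⟩
end

section
/- In a presentable monoid M, if a ≤ b + c, then for every supercompact s ≤ a there exist supercompacts t ≤ b and u ≤ c such that s ≤ t + u. -/
/-- A presentable monoid: a presentable poset with a distinguished supercompact
`zero` and a suprema-preserving commutative associative addition with `zero`
as neutral element. -/
structure IsPresentableMonoid (M : Type*) [PartialOrder M]
    (zero : M) (add : M → M → M) : Prop where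
  pres : IsPresentablePoset M zero
  add_lub : ∀ X Y : Set M, X.Nonempty → Y.Nonempty → ∀ b c : M,
    IsLUB X b → IsLUB Y c →
    IsLUB {z | ∃ x ∈ X, ∃ y ∈ Y, z = add x y} (add b c)
  add_assoc' : ∀ a b c : M, add a (add b c) = add (add a b) c
  add_comm' : ∀ a b : M, add a b = add b a
  zero_add' : ∀ a : M, add zero a = a
lemma scpt_nonempty {A : Type*} [PartialOrder A] (hw : WeaklyPresentable A) (x : A) :
    (Scpt x).Nonempty := by
  by_contra hne
  rw [Set.not_nonempty_iff_eq_empty] at hne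
  have hx := hw.2 x
  rw [hne] at hx
  have hxmin : IsMin x := fun y _ => hx.2 (fun z hz => hz.elim)
  have : x ∈ Scpt x := ⟨hxmin, le_refl x⟩
  rw [hne] at this
  exact this

/-- In a presentable monoid, if `a ≤ b + c` then every supercompact `s ≤ a` is
below `t + u` for some supercompacts `t ≤ b` and `u ≤ c`. -/
theorem stmt_5 {M : Type*} [PartialOrder M] (zero : M) (add : M → M → M)
    (h : IsPresentableMonoid M zero add) :
    ∀ a b c : M, a ≤ add b c → ∀ s : M, IsMin s → s ≤ a →
      ∃ t u : M, IsMin t ∧ t ≤ b ∧ IsMin u ∧ u ≤ c ∧ s ≤ add t u := by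
  intro a b c hbc s hs hsa
  have hb := h.pres.weakly.2 b
  have hc := h.pres.weakly.2 c
  have hnb := scpt_nonempty h.pres.weakly b
  have hnc := scpt_nonempty h.pres.weakly c
  have hlub := h.add_lub (Scpt b) (Scpt c) hnb hnc b c hb hc
  have hne : {z | ∃ x ∈ Scpt b, ∃ y ∈ Scpt c, z = add x y}.Nonempty := by
    obtain ⟨t, ht⟩ := hnb
    obtain ⟨u, hu⟩ := hnc
    exact ⟨add t u, t, ht, u, hu, rfl⟩
  obtain ⟨y, ⟨t, ht, u, hu, rfl⟩, hsy⟩ :=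
    h.pres.min_compact s hs _ hne _ hlub (le_trans hsa hbc)
  exact ⟨t, u, ht.1, ht.2, hu.1, hu.2, hsy⟩
end

section
/- For every hypergroup (G, 0, +, −), the pierced powerset P*(G) with inclusion order, basepoint {0}, addition A + B = ⋃{a + b | a ∈ A, b ∈ B} and inversion −A = {−a | a ∈ A} is a presentable group. -/
/-- A presentable group: a presentable monoid with a suprema-preserving
involution `neg` satisfying the exchange law on supercompacts. -/
structure IsPresentableGroup (G : Type*) [PartialOrder G]
    (zero : G) (add : G → G → G) (neg : G → G) : Prop where
  toMonoid : IsPresentableMonoid G zero add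
  neg_neg' : ∀ a : G, neg (neg a) = a
  neg_lub : ∀ X : Set G, X.Nonempty → ∀ b : G, IsLUB X b → IsLUB (neg '' X) (neg b)
  exchange : ∀ s t u : G, IsMin s → IsMin t → IsMin u →
    s ≤ add t u → t ≤ add s (neg u)
/-- A hypergroup: a pointed set with a commutative, associative multivalued
addition with neutral element `zero`, and a negation satisfying
`0 ∈ a + (−a)` and the exchange law. -/
structure IsHypergroup {G : Type*} (zero : G) (neg : G → G)
    (hadd : G → G → Set G) : Prop where
  hadd_nonempty : ∀ a b : G, (hadd a b).Nonempty
  hadd_zero : ∀ a : G, hadd a zero = {a}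
  hadd_comm : ∀ a b : G, hadd a b = hadd b a
  hadd_assoc : ∀ a b c : G, (⋃ x ∈ hadd a b, hadd x c) = ⋃ x ∈ hadd b c, hadd a x
  zero_mem : ∀ a : G, zero ∈ hadd a (neg a)
  exchange : ∀ a b c : G, a ∈ hadd b c → c ∈ hadd a (neg b)
section PAux
variable {G : Type*}

lemma pp_le_iff {A B : {A : Set G // A.Nonempty}} : A ≤ B ↔ A.1 ⊆ B.1 := Iff.rfl

/-- union of a nonempty family in the pierced powerset -/
def pUnion (S : Set {A : Set G // A.Nonempty}) (hS : S.Nonempty) :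
    {A : Set G // A.Nonempty} :=
  ⟨⋃ A ∈ S, A.1, by
    obtain ⟨A, hA⟩ := hS
    obtain ⟨a, ha⟩ := A.2
    exact ⟨a, Set.mem_iUnion₂.mpr ⟨A, hA, ha⟩⟩⟩

lemma isLUB_pUnion (S : Set {A : Set G // A.Nonempty}) (hS : S.Nonempty) :
    IsLUB S (pUnion S hS) := by
  constructor
  · intro A hA
    exact fun a ha => Set.mem_iUnion₂.mpr ⟨A, hA, ha⟩
  · intro B hB a ha
    obtain ⟨A, hA, ha⟩ := Set.mem_iUnion₂.mp ha
    exact hB hA ha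

lemma pp_isMin_iff {A : {A : Set G // A.Nonempty}} : IsMin A ↔ ∃ a, A.1 = {a} := by
  constructor
  · intro h
    obtain ⟨a, ha⟩ := A.2
    refine ⟨a, ?_⟩
    have hle : (⟨{a}, ⟨a, rfl⟩⟩ : {A : Set G // A.Nonempty}) ≤ A := by
      rw [pp_le_iff]; simpa using ha
    have := h hle
    exact Set.Subset.antisymm this (by simpa using ha)
  · rintro ⟨a, ha⟩ B hB
    rw [pp_le_iff] at hB ⊢
    rw [ha] at hB ⊢
    obtain ⟨b, hb⟩ := B.2
    have : b = a := hB hb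
    intro x hx
    rw [Set.mem_singleton_iff] at hx
    rwa [hx, ← this]

lemma singleton_isMin (a : G) : IsMin (⟨{a}, ⟨a, rfl⟩⟩ : {A : Set G // A.Nonempty}) :=
  pp_isMin_iff.mpr ⟨a, rfl⟩

lemma pp_isLUB_Scpt (A : {A : Set G // A.Nonempty}) : IsLUB (Scpt A) A := by
  constructor
  · intro B hB; exact hB.2
  · intro B hB a ha
    have hmem : (⟨{a}, ⟨a, rfl⟩⟩ : {A : Set G // A.Nonempty}) ∈ Scpt A :=
      ⟨singleton_isMin a, by rw [pp_le_iff]; simpa using ha⟩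
    exact hB hmem rfl

lemma pp_min_compact (s : {A : Set G // A.Nonempty}) (hs : IsMin s) : OrdCompact s := by
  obtain ⟨a, ha⟩ := pp_isMin_iff.mp hs
  intro Y hY b hb hsb
  have hb' : b = pUnion Y hY := hb.unique (isLUB_pUnion Y hY)
  subst hb'
  rw [pp_le_iff, ha] at hsb
  have : a ∈ (pUnion Y hY).1 := hsb rfl
  obtain ⟨y, hy, hay⟩ := Set.mem_iUnion₂.mp this
  exact ⟨y, hy, by rw [pp_le_iff, ha]; simpa using hay⟩

end PAux
section HAux
variable {G : Type*} {zero : G} {neg : G → G} {hadd : G → G → Set G}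

lemma mem_biUnion₂ {α β γ : Type*} {A : Set α} {B : Set β} {f : α → β → Set γ} {g : γ} :
    g ∈ ⋃ a ∈ A, ⋃ b ∈ B, f a b ↔ ∃ a ∈ A, ∃ b ∈ B, g ∈ f a b := by
  simp [Set.mem_iUnion]

lemma assoc_mem (H : IsHypergroup zero neg hadd) (a b c g : G) :
    (∃ x ∈ hadd a b, g ∈ hadd x c) ↔ ∃ x ∈ hadd b c, g ∈ hadd a x := by
  have := Set.ext_iff.mp (H.hadd_assoc a b c) g
  simpa [Set.mem_iUnion] using this

lemma hyper_neg_neg (H : IsHypergroup zero neg hadd) (a : G) : neg (neg a) = a := by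
  have h1 : zero ∈ hadd (neg a) a := by rw [H.hadd_comm]; exact H.zero_mem a
  have h2 := H.exchange zero (neg a) a h1
  rw [H.hadd_comm, H.hadd_zero] at h2
  exact h2.symm

end HAux

/-- For every hypergroup `G`, the pierced powerset `P*(G)` with inclusion,
basepoint `{0}`, union-wise addition and elementwise negation is a
presentable group. -/
theorem stmt_9 {G : Type*} (zero : G) (neg : G → G) (hadd : G → G → Set G)
    (H : IsHypergroup zero neg hadd) :
    IsPresentableGroup {A : Set G // A.Nonempty} ⟨{zero}, ⟨zero, rfl⟩⟩
      (fun A B => ⟨⋃ a ∈ A.1, ⋃ b ∈ B.1, hadd a b, by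
        obtain ⟨a, ha⟩ := A.2
        obtain ⟨b, hb⟩ := B.2
        obtain ⟨c, hc⟩ := H.hadd_nonempty a b
        exact ⟨c, Set.mem_iUnion₂.mpr ⟨a, ha, Set.mem_iUnion₂.mpr ⟨b, hb, hc⟩⟩⟩⟩)
      (fun A => ⟨neg '' A.1, A.2.image neg⟩) := by
  constructor
  case toMonoid =>
    constructor
    case pres =>
      exact ⟨⟨fun S hS _ => ⟨pUnion S hS, isLUB_pUnion S hS⟩, pp_isLUB_Scpt⟩,
        singleton_isMin zero, pp_min_compact⟩
    case add_lub =>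
      intro X Y hX hY b c hb hc
      have hbe : b = pUnion X hX := hb.unique (isLUB_pUnion X hX)
      have hce : c = pUnion Y hY := hc.unique (isLUB_pUnion Y hY)
      subst hbe hce
      have hZ : {z | ∃ x ∈ X, ∃ y ∈ Y,
          z = (⟨⋃ a ∈ x.1, ⋃ b ∈ y.1, hadd a b, by
            obtain ⟨a, ha⟩ := x.2
            obtain ⟨b, hb⟩ := y.2
            obtain ⟨d, hd⟩ := H.hadd_nonempty a b
            exact ⟨d, Set.mem_iUnion₂.mpr ⟨a, ha, Set.mem_iUnion₂.mpr ⟨b, hb, hd⟩⟩⟩⟩ :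
              {A : Set G // A.Nonempty})}.Nonempty := by
        obtain ⟨x, hx⟩ := hX
        obtain ⟨y, hy⟩ := hY
        exact ⟨_, x, hx, y, hy, rfl⟩
      have key : (⟨⋃ a ∈ (pUnion X hX).1, ⋃ b ∈ (pUnion Y hY).1, hadd a b, by
            obtain ⟨a, ha⟩ := (pUnion X hX).2
            obtain ⟨b, hb⟩ := (pUnion Y hY).2
            obtain ⟨d, hd⟩ := H.hadd_nonempty a b
            exact ⟨d, Set.mem_iUnion₂.mpr ⟨a, ha, Set.mem_iUnion₂.mpr ⟨b, hb, hd⟩⟩⟩⟩ :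
              {A : Set G // A.Nonempty}) = pUnion _ hZ := by
        apply Subtype.ext
        ext g
        constructor
        · intro hg
          obtain ⟨a, haU, hg⟩ := Set.mem_iUnion₂.mp hg
          obtain ⟨b', hbU, hg⟩ := Set.mem_iUnion₂.mp hg
          obtain ⟨x, hx, hax⟩ := Set.mem_iUnion₂.mp haU
          obtain ⟨y, hy, hby⟩ := Set.mem_iUnion₂.mp hbU
          exact Set.mem_iUnion₂.mpr ⟨_, ⟨x, hx, y, hy, rfl⟩,
            Set.mem_iUnion₂.mpr ⟨a, hax, Set.mem_iUnion₂.mpr ⟨b', hby, hg⟩⟩⟩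
        · intro hg
          obtain ⟨z, hzZ, hg⟩ := Set.mem_iUnion₂.mp hg
          obtain ⟨x, hx, y, hy, rfl⟩ := hzZ
          obtain ⟨a, hax, hg⟩ := Set.mem_iUnion₂.mp hg
          obtain ⟨b', hby, hg⟩ := Set.mem_iUnion₂.mp hg
          exact Set.mem_iUnion₂.mpr ⟨a, Set.mem_iUnion₂.mpr ⟨x, hx, hax⟩,
            Set.mem_iUnion₂.mpr ⟨b', Set.mem_iUnion₂.mpr ⟨y, hy, hby⟩, hg⟩⟩
      rw [key]
      exact isLUB_pUnion _ hZ
    case add_assoc' =>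
      intro A B C
      apply Subtype.ext
      ext g
      constructor
      · intro hg
        obtain ⟨a, ha, hg⟩ := Set.mem_iUnion₂.mp hg
        obtain ⟨x, hx, hg⟩ := Set.mem_iUnion₂.mp hg
        obtain ⟨b, hb, hx⟩ := Set.mem_iUnion₂.mp hx
        obtain ⟨c, hc, hx⟩ := Set.mem_iUnion₂.mp hx
        obtain ⟨y, hy, hgy⟩ := (assoc_mem H a b c g).mpr ⟨x, hx, hg⟩
        exact Set.mem_iUnion₂.mpr ⟨y,
          Set.mem_iUnion₂.mpr ⟨a, ha, Set.mem_iUnion₂.mpr ⟨b, hb, hy⟩⟩,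
          Set.mem_iUnion₂.mpr ⟨c, hc, hgy⟩⟩
      · intro hg
        obtain ⟨y, hy, hg⟩ := Set.mem_iUnion₂.mp hg
        obtain ⟨c, hc, hg⟩ := Set.mem_iUnion₂.mp hg
        obtain ⟨a, ha, hy⟩ := Set.mem_iUnion₂.mp hy
        obtain ⟨b, hb, hy⟩ := Set.mem_iUnion₂.mp hy
        obtain ⟨x, hx, hgx⟩ := (assoc_mem H a b c g).mp ⟨y, hy, hg⟩
        exact Set.mem_iUnion₂.mpr ⟨a, ha,
          Set.mem_iUnion₂.mpr ⟨x, Set.mem_iUnion₂.mpr ⟨b, hb,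
            Set.mem_iUnion₂.mpr ⟨c, hc, hx⟩⟩, hgx⟩⟩
    case add_comm' =>
      intro A B
      apply Subtype.ext
      ext g
      constructor
      · intro hg
        obtain ⟨a, ha, hg⟩ := Set.mem_iUnion₂.mp hg
        obtain ⟨b, hb, hg⟩ := Set.mem_iUnion₂.mp hg
        exact Set.mem_iUnion₂.mpr ⟨b, hb, Set.mem_iUnion₂.mpr ⟨a, ha,
          H.hadd_comm a b ▸ hg⟩⟩
      · intro hg
        obtain ⟨b, hb, hg⟩ := Set.mem_iUnion₂.mp hg
        obtain ⟨a, ha, hg⟩ := Set.mem_iUnion₂.mp hg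
        exact Set.mem_iUnion₂.mpr ⟨a, ha, Set.mem_iUnion₂.mpr ⟨b, hb,
          H.hadd_comm b a ▸ hg⟩⟩
    case zero_add' =>
      intro A
      apply Subtype.ext
      ext g
      constructor
      · intro hg
        obtain ⟨z, hz, hg⟩ := Set.mem_iUnion₂.mp hg
        obtain ⟨a, haA, hg⟩ := Set.mem_iUnion₂.mp hg
        rw [Set.mem_singleton_iff] at hz
        rw [hz, H.hadd_comm, H.hadd_zero, Set.mem_singleton_iff] at hg
        rw [hg]; exact haA
      · intro hg
        exact Set.mem_iUnion₂.mpr ⟨zero, rfl, Set.mem_iUnion₂.mpr ⟨g, hg, by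
          rw [H.hadd_comm, H.hadd_zero]; exact rfl⟩⟩
  case neg_neg' =>
    intro A
    apply Subtype.ext
    show neg '' (neg '' A.1) = A.1
    rw [Set.image_image]
    simp only [hyper_neg_neg H, Set.image_id']
  case neg_lub =>
    intro X hX b hb
    have hbe : b = pUnion X hX := hb.unique (isLUB_pUnion X hX)
    subst hbe
    have hZ : ((fun A : {A : Set G // A.Nonempty} => (⟨neg '' A.1, A.2.image neg⟩ :
        {A : Set G // A.Nonempty})) '' X).Nonempty := hX.image _
    have key : (⟨neg '' (pUnion X hX).1, (pUnion X hX).2.image neg⟩ :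
        {A : Set G // A.Nonempty}) = pUnion _ hZ := by
      apply Subtype.ext
      ext g
      simp only [pUnion, Set.mem_image, Set.mem_iUnion]
      constructor
      · rintro ⟨a, ⟨A, hA, haA⟩, rfl⟩
        exact ⟨_, ⟨A, hA, rfl⟩, ⟨a, haA, rfl⟩⟩
      · rintro ⟨B, ⟨A, hA, rfl⟩, hg⟩
        obtain ⟨a, haA, rfl⟩ := hg
        exact ⟨a, ⟨A, hA, haA⟩, rfl⟩
    rw [key]
    exact isLUB_pUnion _ hZ
  case exchange =>
    intro s t u hs ht hu hstu
    obtain ⟨a, ha⟩ := pp_isMin_iff.mp hs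
    obtain ⟨b, hb⟩ := pp_isMin_iff.mp ht
    obtain ⟨c, hc⟩ := pp_isMin_iff.mp hu
    rw [pp_le_iff] at hstu ⊢
    have hmem : a ∈ hadd b c := by
      have h1 : a ∈ ⋃ b' ∈ t.1, ⋃ c' ∈ u.1, hadd b' c' :=
        hstu (show a ∈ s.1 by rw [ha]; rfl)
      obtain ⟨b', hb', h1⟩ := Set.mem_iUnion₂.mp h1
      obtain ⟨c', hc', h1⟩ := Set.mem_iUnion₂.mp h1
      rw [hb, Set.mem_singleton_iff] at hb'
      rw [hc, Set.mem_singleton_iff] at hc'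
      subst hb'; subst hc'
      exact h1
    have hex : b ∈ hadd a (neg c) := by
      apply H.exchange
      rwa [H.hadd_comm]
    rw [hb]
    intro x hx
    rw [Set.mem_singleton_iff] at hx
    subst hx
    show x ∈ ⋃ a' ∈ s.1, ⋃ d ∈ neg '' u.1, hadd a' d
    rw [ha, hc]
    exact Set.mem_iUnion₂.mpr ⟨a, rfl, Set.mem_iUnion₂.mpr ⟨neg c, ⟨c, rfl, rfl⟩, hex⟩⟩
end

section
/- Let F be a hyperfield and T a subgroup of its multiplicative group. The relation x ∼ y iff x·s = y·t for some s, t ∈ T is an equivalence relation on F, and the induced operations (class of x is in class of y + class of z iff x·s ∈ y·t + z·u for some s,t,u ∈ T; multiplication and negation induced) make the quotient F/_m T a hyperfield. -/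
/-- A hyperfield: a hypergroup with a compatible commutative monoid
multiplication with identity `one ≠ zero`, `0·a = 0`, distributivity over the
multivalued addition, and every nonzero element invertible. -/
structure IsHyperfield {F : Type*} (zero one : F) (hadd : F → F → Set F)
    (neg : F → F) (mul : F → F → F) : Prop where
  hadd_nonempty : ∀ a b : F, (hadd a b).Nonempty
  hadd_comm : ∀ a b : F, hadd a b = hadd b a
  hadd_zero : ∀ a : F, hadd a zero = {a}
  hadd_assoc : ∀ a b c : F, (⋃ x ∈ hadd a b, hadd x c) = ⋃ x ∈ hadd b c, hadd a x
  zero_mem_sub : ∀ a : F, zero ∈ hadd a (neg a)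
  exchange : ∀ a b c : F, a ∈ hadd b c → c ∈ hadd a (neg b)
  mul_assoc' : ∀ a b c : F, mul (mul a b) c = mul a (mul b c)
  mul_comm' : ∀ a b : F, mul a b = mul b a
  one_mul' : ∀ a : F, mul one a = a
  zero_mul' : ∀ a : F, mul zero a = zero
  distrib : ∀ a b c : F, mul a '' hadd b c = hadd (mul a b) (mul a c)
  one_ne_zero' : one ≠ zero
  exists_inv : ∀ a : F, a ≠ zero → ∃ b : F, mul a b = one
/-- The equivalence relation `x ∼ y` iff `xs = yt` for some `s, t ∈ T`. -/
def simRel {F : Type*} (mul : F → F → F) (T : Set F) : F → F → Prop :=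
  fun x y => ∃ s ∈ T, ∃ t ∈ T, mul x s = mul y t

/-- The induced multivalued addition on the quotient:
`x̄ ∈ ȳ + z̄` iff `xs ∈ yt + zu` for some `s, t, u ∈ T`. -/
def quotHadd {F : Type*} (mul : F → F → F) (hadd : F → F → Set F) (T : Set F) :
    Quot (simRel mul T) → Quot (simRel mul T) → Set (Quot (simRel mul T)) :=
  fun Y Z => {X | ∃ x y z : F, X = Quot.mk _ x ∧ Y = Quot.mk _ y ∧ Z = Quot.mk _ z ∧
    ∃ s ∈ T, ∃ t ∈ T, ∃ u ∈ T, mul x s ∈ hadd (mul y t) (mul z u)}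

/-!
Multiplying a relation `x s ∈ y t + z u` through by an element of `T` gives another relation
of the same shape, because `T` is closed under multiplication and multiplication distributes
over the hyperaddition. Hence the induced hyperaddition does not depend on representatives,
and any representative may be replaced by a `T`-multiple of itself. With this freedom the
hyperfield axioms of `F` descend to the quotient: for associativity, the middle term of
`(ā + b̄) + c̄` is normalised to `w s` with `w s ∈ a t + b u`, after which associativity in `F`
applies.
-/

section

variable {F : Type*} {zero one : F} {hadd : F → F → Set F} {neg : F → F} {mul : F → F → F}

namespace IsHyperfield

theorem mul_one (hF : IsHyperfield zero one hadd neg mul) (a : F) : mul a one = a := by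
  rw [hF.mul_comm', hF.one_mul']

theorem mul_right_comm (hF : IsHyperfield zero one hadd neg mul) (a b c : F) :
    mul (mul a b) c = mul (mul a c) b := by
  rw [hF.mul_assoc', hF.mul_comm' b, ← hF.mul_assoc']

theorem mul_mul_mul_comm (hF : IsHyperfield zero one hadd neg mul) (a b c d : F) :
    mul (mul a b) (mul c d) = mul (mul a c) (mul b d) := by
  rw [← hF.mul_assoc', hF.mul_right_comm a b c, hF.mul_assoc']

theorem eq_neg_of_zero_mem_hadd (hF : IsHyperfield zero one hadd neg mul) {a b : F}
    (h : zero ∈ hadd a b) : b = neg a := by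
  simpa only [hF.hadd_comm zero, hF.hadd_zero, Set.mem_singleton_iff] using hF.exchange zero a b h

theorem mul_mem_hadd_mul (hF : IsHyperfield zero one hadd neg mul) (a : F) {w b c : F}
    (h : w ∈ hadd b c) : mul a w ∈ hadd (mul a b) (mul a c) :=
  hF.distrib a b c ▸ Set.mem_image_of_mem (mul a) h

theorem mul_mem_hadd_mul_right (hF : IsHyperfield zero one hadd neg mul) (a : F) {w b c : F}
    (h : w ∈ hadd b c) : mul w a ∈ hadd (mul b a) (mul c a) := by
  simpa only [hF.mul_comm' a] using hF.mul_mem_hadd_mul a h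

theorem neg_mul (hF : IsHyperfield zero one hadd neg mul) (a b : F) :
    mul (neg a) b = neg (mul a b) := by
  refine hF.eq_neg_of_zero_mem_hadd ?_
  rw [← hF.zero_mul' b]
  exact hF.mul_mem_hadd_mul_right b (hF.zero_mem_sub a)

end IsHyperfield

structure IsMulSubmonoid (one : F) (mul : F → F → F) (T : Set F) : Prop where
  one_mem : one ∈ T
  mul_mem : ∀ s ∈ T, ∀ t ∈ T, mul s t ∈ T

def ScaledMemHadd (hadd : F → F → Set F) (mul : F → F → F) (T : Set F) (x y z : F) : Prop :=
  ∃ s ∈ T, ∃ t ∈ T, ∃ u ∈ T, mul x s ∈ hadd (mul y t) (mul z u)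

variable {T : Set F}

theorem simRel_equivalence (hF : IsHyperfield zero one hadd neg mul)
    (hT : IsMulSubmonoid one mul T) : Equivalence (simRel mul T) where
  refl _ := ⟨one, hT.one_mem, one, hT.one_mem, rfl⟩
  symm := fun ⟨s, hs, t, ht, h⟩ => ⟨t, ht, s, hs, h.symm⟩
  trans := by
    rintro x y z ⟨s, hs, t, ht, hxy⟩ ⟨s', hs', t', ht', hyz⟩
    refine ⟨mul s s', hT.mul_mem s hs s' hs', mul t' t, hT.mul_mem t' ht' t ht, ?_⟩
    calc mul x (mul s s') = mul (mul y s') t := by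
          rw [← hF.mul_assoc', hxy, hF.mul_right_comm]
      _ = mul z (mul t' t) := by rw [hyz, hF.mul_assoc']

theorem simRel_mul_self (hF : IsHyperfield zero one hadd neg mul)
    (hT : IsMulSubmonoid one mul T) (x : F) {s : F} (hs : s ∈ T) :
    simRel mul T (mul x s) x :=
  ⟨one, hT.one_mem, s, hs, hF.mul_one _⟩

theorem simRel.mul_congr (hF : IsHyperfield zero one hadd neg mul)
    (hT : IsMulSubmonoid one mul T) {x x' y y' : F} (hx : simRel mul T x x')
    (hy : simRel mul T y y') : simRel mul T (mul x y) (mul x' y') := by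
  obtain ⟨s, hs, s', hs', hxs⟩ := hx
  obtain ⟨t, ht, t', ht', hyt⟩ := hy
  refine ⟨mul s t, hT.mul_mem s hs t ht, mul s' t', hT.mul_mem s' hs' t' ht', ?_⟩
  rw [hF.mul_mul_mul_comm, hxs, hyt, hF.mul_mul_mul_comm]

theorem simRel.neg_congr (hF : IsHyperfield zero one hadd neg mul) {x x' : F}
    (hx : simRel mul T x x') : simRel mul T (neg x) (neg x') := by
  obtain ⟨s, hs, s', hs', hxs⟩ := hx
  exact ⟨s, hs, s', hs', by rw [hF.neg_mul, hF.neg_mul, hxs]⟩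

theorem ScaledMemHadd.of_simRel_left (hF : IsHyperfield zero one hadd neg mul)
    (hT : IsMulSubmonoid one mul T) {x x' y z : F} (hx : simRel mul T x x')
    (h : ScaledMemHadd hadd mul T x y z) : ScaledMemHadd hadd mul T x' y z := by
  obtain ⟨r, hr, r', hr', hxr⟩ := hx
  obtain ⟨s, hs, t, ht, u, hu, h⟩ := h
  refine ⟨mul r' s, hT.mul_mem r' hr' s hs, mul t r, hT.mul_mem t ht r hr,
    mul u r, hT.mul_mem u hu r hr, ?_⟩
  have h := hF.mul_mem_hadd_mul_right r h
  rw [hF.mul_right_comm x, hxr] at h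
  simpa only [hF.mul_assoc'] using h

theorem ScaledMemHadd.of_simRel_mid (hF : IsHyperfield zero one hadd neg mul)
    (hT : IsMulSubmonoid one mul T) {x y y' z : F} (hy : simRel mul T y y')
    (h : ScaledMemHadd hadd mul T x y z) : ScaledMemHadd hadd mul T x y' z := by
  obtain ⟨r, hr, r', hr', hyr⟩ := hy
  obtain ⟨s, hs, t, ht, u, hu, h⟩ := h
  refine ⟨mul s r, hT.mul_mem s hs r hr, mul r' t, hT.mul_mem r' hr' t ht,
    mul u r, hT.mul_mem u hu r hr, ?_⟩
  have h := hF.mul_mem_hadd_mul_right r h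
  rw [hF.mul_right_comm y, hyr] at h
  simpa only [hF.mul_assoc'] using h

theorem ScaledMemHadd.swap (hF : IsHyperfield zero one hadd neg mul) {x y z : F}
    (h : ScaledMemHadd hadd mul T x y z) : ScaledMemHadd hadd mul T x z y := by
  obtain ⟨s, hs, t, ht, u, hu, h⟩ := h
  exact ⟨s, hs, u, hu, t, ht, hF.hadd_comm _ _ ▸ h⟩

theorem ScaledMemHadd.of_simRel (hF : IsHyperfield zero one hadd neg mul)
    (hT : IsMulSubmonoid one mul T) {x x' y y' z z' : F} (hx : simRel mul T x x')
    (hy : simRel mul T y y') (hz : simRel mul T z z') (h : ScaledMemHadd hadd mul T x y z) :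
    ScaledMemHadd hadd mul T x' y' z' :=
  ((((h.of_simRel_left hF hT hx).of_simRel_mid hF hT hy).swap hF).of_simRel_mid hF hT hz).swap hF

theorem scaledMemHadd_congr (hF : IsHyperfield zero one hadd neg mul)
    (hT : IsMulSubmonoid one mul T) {x x' y y' z z' : F} (hx : simRel mul T x x')
    (hy : simRel mul T y y') (hz : simRel mul T z z') :
    ScaledMemHadd hadd mul T x y z ↔ ScaledMemHadd hadd mul T x' y' z' :=
  have hr := simRel_equivalence hF hT
  ⟨.of_simRel hF hT hx hy hz, .of_simRel hF hT (hr.symm hx) (hr.symm hy) (hr.symm hz)⟩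

theorem mk_eq_mk_iff_simRel (hF : IsHyperfield zero one hadd neg mul)
    (hT : IsMulSubmonoid one mul T)
    {x y : F} : Quot.mk (simRel mul T) x = Quot.mk _ y ↔ simRel mul T x y :=
  Quot.eq.trans (simRel_equivalence hF hT).eqvGen_iff

theorem mk_mem_quotHadd_iff (hF : IsHyperfield zero one hadd neg mul)
    (hT : IsMulSubmonoid one mul T) {x y z : F} :
    Quot.mk _ x ∈ quotHadd mul hadd T (Quot.mk _ y) (Quot.mk _ z) ↔
      ScaledMemHadd hadd mul T x y z := by
  refine ⟨?_, fun h => ⟨x, y, z, rfl, rfl, rfl, h⟩⟩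
  rintro ⟨x', y', z', hx, hy, hz, h⟩
  rw [mk_eq_mk_iff_simRel hF hT] at hx hy hz
  exact (scaledMemHadd_congr hF hT hx hy hz).2 h

theorem mk_mul_out (hF : IsHyperfield zero one hadd neg mul) (hT : IsMulSubmonoid one mul T)
    (x y : F) :
    Quot.mk (simRel mul T) (mul (Quot.mk (simRel mul T) x).out (Quot.mk (simRel mul T) y).out) =
      Quot.mk _ (mul x y) := by
  refine Quot.sound (simRel.mul_congr hF hT ?_ ?_) <;>
    exact (mk_eq_mk_iff_simRel hF hT).1 (Quot.out_eq _)

theorem mk_neg_out (hF : IsHyperfield zero one hadd neg mul) (hT : IsMulSubmonoid one mul T)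
    (x : F) :
    Quot.mk (simRel mul T) (neg (Quot.mk (simRel mul T) x).out) = Quot.mk _ (neg x) :=
  Quot.sound (simRel.neg_congr hF ((mk_eq_mk_iff_simRel hF hT).1 (Quot.out_eq _)))

theorem quotHadd_comm (hF : IsHyperfield zero one hadd neg mul) (A B : Quot (simRel mul T)) :
    quotHadd mul hadd T A B = quotHadd mul hadd T B A := by
  ext X
  constructor <;>
    exact fun ⟨x, y, z, hx, hy, hz, h⟩ => ⟨x, z, y, hx, hz, hy, ScaledMemHadd.swap hF h⟩

theorem quotHadd_mk_zero (hF : IsHyperfield zero one hadd neg mul)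
    (hT : IsMulSubmonoid one mul T) (A : Quot (simRel mul T)) :
    quotHadd mul hadd T A (Quot.mk _ zero) = {A} := by
  obtain ⟨a⟩ := A
  ext ⟨x⟩
  rw [mk_mem_quotHadd_iff hF hT, Set.mem_singleton_iff, mk_eq_mk_iff_simRel hF hT]
  constructor
  · rintro ⟨s, hs, t, ht, u, hu, h⟩
    rw [hF.zero_mul', hF.hadd_zero] at h
    exact ⟨s, hs, t, ht, h⟩
  · rintro ⟨s, hs, t, ht, h⟩
    exact ⟨s, hs, t, ht, one, hT.one_mem, by rw [hF.zero_mul', hF.hadd_zero, h]; rfl⟩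

theorem quotHadd_assoc_subset (hF : IsHyperfield zero one hadd neg mul)
    (hT : IsMulSubmonoid one mul T) (A B C : Quot (simRel mul T)) :
    (⋃ X ∈ quotHadd mul hadd T A B, quotHadd mul hadd T X C) ⊆
      ⋃ X ∈ quotHadd mul hadd T B C, quotHadd mul hadd T A X := by
  obtain ⟨a⟩ := A
  obtain ⟨b⟩ := B
  obtain ⟨c⟩ := C
  simp only [Set.subset_def, Set.mem_iUnion]
  rintro ⟨x⟩ ⟨⟨w⟩, hw, hx⟩
  rw [mk_mem_quotHadd_iff hF hT] at hw hx
  obtain ⟨s, hs, t, ht, u, hu, hw⟩ := hw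
  obtain ⟨s', hs', t', ht', u', hu', hx⟩ :=
    hx.of_simRel_mid hF hT ((simRel_equivalence hF hT).symm (simRel_mul_self hF hT w hs))
  have hwt' := hF.mul_mem_hadd_mul_right t' hw
  simp only [hF.mul_assoc'] at hwt'
  have hx : mul x s' ∈ ⋃ p ∈ hadd (mul a (mul t t')) (mul b (mul u t')), hadd p (mul c u') :=
    Set.mem_biUnion hwt' (by rwa [← hF.mul_assoc'])
  rw [hF.hadd_assoc] at hx
  obtain ⟨v, hv, hx⟩ := Set.mem_iUnion₂.1 hx
  refine ⟨Quot.mk _ v, ?_, ?_⟩ <;> rw [mk_mem_quotHadd_iff hF hT]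
  · exact ⟨one, hT.one_mem, mul u t', hT.mul_mem u hu t' ht', u', hu', by rwa [hF.mul_one]⟩
  · exact ⟨s', hs', mul t t', hT.mul_mem t ht t' ht', one, hT.one_mem, by rwa [hF.mul_one]⟩

theorem quotHadd_assoc (hF : IsHyperfield zero one hadd neg mul)
    (hT : IsMulSubmonoid one mul T) (A B C : Quot (simRel mul T)) :
    (⋃ X ∈ quotHadd mul hadd T A B, quotHadd mul hadd T X C) =
      ⋃ X ∈ quotHadd mul hadd T B C, quotHadd mul hadd T A X := by
  refine (quotHadd_assoc_subset hF hT A B C).antisymm ?_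
  have h := quotHadd_assoc_subset hF hT C B A
  rw [quotHadd_comm hF C B] at h
  simp_rw [quotHadd_comm hF _ A, quotHadd_comm hF C] at h
  exact h

theorem zero_mem_quotHadd_neg (hF : IsHyperfield zero one hadd neg mul)
    (hT : IsMulSubmonoid one mul T) (A : Quot (simRel mul T)) :
    Quot.mk _ zero ∈ quotHadd mul hadd T A (Quot.mk _ (neg A.out)) := by
  obtain ⟨a⟩ := A
  rw [mk_neg_out hF hT, mk_mem_quotHadd_iff hF hT]
  exact ⟨one, hT.one_mem, one, hT.one_mem, one, hT.one_mem, by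
    simpa only [hF.mul_one] using hF.zero_mem_sub a⟩

theorem quotHadd_exchange (hF : IsHyperfield zero one hadd neg mul)
    (hT : IsMulSubmonoid one mul T) (A B C : Quot (simRel mul T))
    (h : A ∈ quotHadd mul hadd T B C) : C ∈ quotHadd mul hadd T A (Quot.mk _ (neg B.out)) := by
  obtain ⟨a⟩ := A
  obtain ⟨b⟩ := B
  obtain ⟨c⟩ := C
  rw [mk_neg_out hF hT, mk_mem_quotHadd_iff hF hT]
  obtain ⟨s, hs, t, ht, u, hu, h⟩ := (mk_mem_quotHadd_iff hF hT).1 h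
  exact ⟨u, hu, s, hs, t, ht, hF.neg_mul b t ▸ hF.exchange _ _ _ h⟩

theorem quot_distrib (hF : IsHyperfield zero one hadd neg mul)
    (hT : IsMulSubmonoid one mul T) (A B C : Quot (simRel mul T)) :
    (fun W => Quot.mk _ (mul A.out W.out)) '' quotHadd mul hadd T B C =
      quotHadd mul hadd T (Quot.mk _ (mul A.out B.out)) (Quot.mk _ (mul A.out C.out)) := by
  obtain ⟨a⟩ := A
  obtain ⟨b⟩ := B
  obtain ⟨c⟩ := C
  rw [mk_mul_out hF hT, mk_mul_out hF hT]
  ext ⟨x⟩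
  rw [mk_mem_quotHadd_iff hF hT]
  constructor
  · rintro ⟨⟨w⟩, hw, hwx⟩
    dsimp only at hwx
    rw [mk_mul_out hF hT, mk_eq_mk_iff_simRel hF hT] at hwx
    obtain ⟨s, hs, t, ht, u, hu, hw⟩ := (mk_mem_quotHadd_iff hF hT).1 hw
    refine ScaledMemHadd.of_simRel_left hF hT hwx ⟨s, hs, t, ht, u, hu, ?_⟩
    simpa only [hF.mul_assoc'] using hF.mul_mem_hadd_mul a hw
  · rintro ⟨s, hs, t, ht, u, hu, hx⟩
    by_cases ha : a = zero
    · rw [ha] at hx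
      simp only [hF.zero_mul', hF.hadd_zero, Set.mem_singleton_iff] at hx
      obtain ⟨w, hw⟩ := hF.hadd_nonempty b c
      refine ⟨Quot.mk _ w, (mk_mem_quotHadd_iff hF hT).2 ⟨one, hT.one_mem, one, hT.one_mem,
        one, hT.one_mem, by simpa only [hF.mul_one] using hw⟩, ?_⟩
      dsimp only
      rw [mk_mul_out hF hT, ha, hF.zero_mul', mk_eq_mk_iff_simRel hF hT]
      exact ⟨s, hs, s, hs, by rw [hF.zero_mul', hx]⟩
    · obtain ⟨a', haa'⟩ := hF.exists_inv a ha
      have hx := hF.mul_mem_hadd_mul a' hx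
      simp only [← hF.mul_assoc', hF.mul_comm' a' a, haa', hF.one_mul'] at hx
      refine ⟨Quot.mk _ (mul a' x),
        (mk_mem_quotHadd_iff hF hT).2 ⟨s, hs, t, ht, u, hu, hx⟩, ?_⟩
      dsimp only
      rw [mk_mul_out hF hT, ← hF.mul_assoc', haa', hF.one_mul']

theorem isHyperfield_quot (hF : IsHyperfield zero one hadd neg mul)
    (hT : IsMulSubmonoid one mul T) (hT0 : ∀ t ∈ T, t ≠ zero) :
    IsHyperfield (F := Quot (simRel mul T))
      (Quot.mk _ zero) (Quot.mk _ one)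
      (quotHadd mul hadd T)
      (fun Y => Quot.mk _ (neg Y.out))
      (fun Y Z => Quot.mk _ (mul Y.out Z.out)) where
  hadd_nonempty := by
    rintro ⟨b⟩ ⟨c⟩
    obtain ⟨w, hw⟩ := hF.hadd_nonempty b c
    exact ⟨Quot.mk _ w, (mk_mem_quotHadd_iff hF hT).2 ⟨one, hT.one_mem, one, hT.one_mem,
      one, hT.one_mem, by simpa only [hF.mul_one] using hw⟩⟩
  hadd_comm := quotHadd_comm hF
  hadd_zero := quotHadd_mk_zero hF hT
  hadd_assoc := quotHadd_assoc hF hT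
  zero_mem_sub := zero_mem_quotHadd_neg hF hT
  exchange := quotHadd_exchange hF hT
  mul_assoc' := by
    rintro ⟨a⟩ ⟨b⟩ ⟨c⟩
    simp only [mk_mul_out hF hT, hF.mul_assoc']
  mul_comm' := by
    rintro ⟨a⟩ ⟨b⟩
    simp only [mk_mul_out hF hT, hF.mul_comm' a]
  one_mul' := by
    rintro ⟨a⟩
    simp only [mk_mul_out hF hT, hF.one_mul']
  zero_mul' := by
    rintro ⟨a⟩
    simp only [mk_mul_out hF hT, hF.zero_mul']
  distrib := quot_distrib hF hT
  one_ne_zero' h := by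
    obtain ⟨s, hs, t, _, h⟩ := (mk_eq_mk_iff_simRel hF hT).1 h
    rw [hF.one_mul', hF.zero_mul'] at h
    exact hT0 s hs h
  exists_inv := by
    rintro ⟨a⟩ ha
    obtain ⟨b, hab⟩ := hF.exists_inv a (fun h => ha (h ▸ rfl))
    exact ⟨Quot.mk _ b, by simp only [mk_mul_out hF hT, hab]⟩

end

theorem stmt_11_general {F : Type*} (zero one : F) (hadd : F → F → Set F)
    (neg : F → F) (mul : F → F → F)
    (hF : IsHyperfield zero one hadd neg mul)
    (T : Set F) (hT0 : ∀ t ∈ T, t ≠ zero) (hT1 : one ∈ T)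
    (hTmul : ∀ s ∈ T, ∀ t ∈ T, mul s t ∈ T) :
    Equivalence (simRel mul T) ∧
    -- the induced multiplication and negation are well-defined
    (∀ x x' y y' : F, simRel mul T x x' → simRel mul T y y' →
      simRel mul T (mul x y) (mul x' y') ∧ simRel mul T (neg x) (neg x')) ∧
    -- the induced multivalued addition is well-defined
    (∀ x x' y y' z z' : F, simRel mul T x x' → simRel mul T y y' → simRel mul T z z' →
      ((∃ s ∈ T, ∃ t ∈ T, ∃ u ∈ T, mul x s ∈ hadd (mul y t) (mul z u)) ↔
       (∃ s ∈ T, ∃ t ∈ T, ∃ u ∈ T, mul x' s ∈ hadd (mul y' t) (mul z' u)))) ∧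
    -- the quotient is a hyperfield
    IsHyperfield (F := Quot (simRel mul T))
      (Quot.mk _ zero) (Quot.mk _ one)
      (quotHadd mul hadd T)
      (fun Y => Quot.mk _ (neg Y.out))
      (fun Y Z => Quot.mk _ (mul Y.out Z.out)) := by
  have hT : IsMulSubmonoid one mul T := ⟨hT1, hTmul⟩
  exact ⟨simRel_equivalence hF hT,
    fun _ _ _ _ hx hy => ⟨simRel.mul_congr hF hT hx hy, simRel.neg_congr hF hx⟩,
    fun _ _ _ _ _ _ => scaledMemHadd_congr hF hT,
    isHyperfield_quot hF hT hT0⟩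

/-- For a hyperfield `F` and a subgroup `T` of its multiplicative group, the
relation `x ∼ y ⟺ xs = yt` for some `s,t ∈ T` is an equivalence relation, the
induced operations are well-defined, and the quotient `F/_m T` is again a
hyperfield. -/
theorem stmt_11 {F : Type*} (zero one : F) (hadd : F → F → Set F)
    (neg : F → F) (mul : F → F → F)
    (hF : IsHyperfield zero one hadd neg mul)
    (T : Set F) (hT0 : ∀ t ∈ T, t ≠ zero) (hT1 : one ∈ T)
    (hTmul : ∀ s ∈ T, ∀ t ∈ T, mul s t ∈ T)
    (hTinv : ∀ s ∈ T, ∃ s' ∈ T, mul s s' = one) :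
    Equivalence (simRel mul T) ∧
    -- the induced multiplication and negation are well-defined
    (∀ x x' y y' : F, simRel mul T x x' → simRel mul T y y' →
      simRel mul T (mul x y) (mul x' y') ∧ simRel mul T (neg x) (neg x')) ∧
    -- the induced multivalued addition is well-defined
    (∀ x x' y y' z z' : F, simRel mul T x x' → simRel mul T y y' → simRel mul T z z' →
      ((∃ s ∈ T, ∃ t ∈ T, ∃ u ∈ T, mul x s ∈ hadd (mul y t) (mul z u)) ↔
       (∃ s ∈ T, ∃ t ∈ T, ∃ u ∈ T, mul x' s ∈ hadd (mul y' t) (mul z' u)))) ∧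
    -- the quotient is a hyperfield
    IsHyperfield (F := Quot (simRel mul T))
      (Quot.mk _ zero) (Quot.mk _ one)
      (quotHadd mul hadd T)
      (fun Y => Quot.mk _ (neg Y.out))
      (fun Y Z => Quot.mk _ (mul Y.out Z.out)) :=
  stmt_11_general zero one hadd neg mul hF T hT0 hT1 hTmul
end

section
/- For any hyperfield (F, 0, +, −, 1, ·), the modified addition a +' b defined as: a + b if a = 0 or b = 0; (a + b) ∪ {a, b} if a, b ≠ 0 and a ≠ −b; and all of F if a, b ≠ 0 and a = −b, again makes (F, 0, +', −, 1, ·) a hyperfield. -/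
open Classical in
/-- The modified ("prime") addition on a hyperfield. -/
noncomputable def primeAdd {F : Type*} (zero : F) (hadd : F → F → Set F)
    (neg : F → F) (a b : F) : Set F :=
  if a = zero ∨ b = zero then hadd a b
  else if a = neg b then Set.univ
  else hadd a b ∪ {a, b}

section Aux

variable {F : Type*} {zero one : F} {hadd : F → F → Set F} {neg : F → F} {mul : F → F → F}

private lemma zero_hadd' (hF : IsHyperfield zero one hadd neg mul) (a : F) :
    hadd zero a = {a} := by rw [hF.hadd_comm]; exact hF.hadd_zero a

private lemma negneg (hF : IsHyperfield zero one hadd neg mul) (a : F) :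
    neg (neg a) = a := by
  have h0 : zero ∈ hadd (neg a) a := by rw [hF.hadd_comm]; exact hF.zero_mem_sub a
  have h1 := hF.exchange zero (neg a) a h0
  rw [zero_hadd' hF] at h1
  exact (Set.mem_singleton_iff.mp h1).symm

private lemma negzero (hF : IsHyperfield zero one hadd neg mul) : neg zero = zero := by
  have h := hF.zero_mem_sub zero
  rw [zero_hadd' hF] at h
  exact (Set.mem_singleton_iff.mp h).symm

private lemma neg_symm (hF : IsHyperfield zero one hadd neg mul) {a b : F}
    (h : a = neg b) : b = neg a := by
  subst h; exact (negneg hF b).symm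

private lemma neg_ne_zero' (hF : IsHyperfield zero one hadd neg mul) {a : F}
    (h : a ≠ zero) : neg a ≠ zero := by
  intro h0
  apply h
  have := negneg hF a
  rw [h0, negzero hF] at this
  exact this.symm

private lemma eq_neg_of_zero_mem (hF : IsHyperfield zero one hadd neg mul) {a b : F}
    (h : zero ∈ hadd a b) : b = neg a := by
  have h1 := hF.exchange zero a b h
  rw [zero_hadd' hF] at h1
  exact Set.mem_singleton_iff.mp h1

private lemma pA_eq_hadd {a b : F} (h : a = zero ∨ b = zero) :
    primeAdd zero hadd neg a b = hadd a b := by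
  simp only [primeAdd, if_pos h]

private lemma pA_eq_univ {a b : F} (ha : a ≠ zero) (hb : b ≠ zero) (h : a = neg b) :
    primeAdd zero hadd neg a b = Set.univ := by
  simp only [primeAdd]
  rw [if_neg (by tauto), if_pos h]

private lemma pA_eq_union {a b : F} (ha : a ≠ zero) (hb : b ≠ zero) (h : a ≠ neg b) :
    primeAdd zero hadd neg a b = hadd a b ∪ {a, b} := by
  simp only [primeAdd]
  rw [if_neg (by tauto), if_neg h]

private lemma hadd_subset_pA (hF : IsHyperfield zero one hadd neg mul) (a b : F) :
    hadd a b ⊆ primeAdd zero hadd neg a b := by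
  by_cases h0 : a = zero ∨ b = zero
  · rw [pA_eq_hadd h0]
  · push_neg at h0
    by_cases h : a = neg b
    · rw [pA_eq_univ h0.1 h0.2 h]; exact Set.subset_univ _
    · rw [pA_eq_union h0.1 h0.2 h]; exact Set.subset_union_left

private lemma mem_pA_self_left (hF : IsHyperfield zero one hadd neg mul) {a b : F}
    (ha : a ≠ zero) (hb : b ≠ zero) : a ∈ primeAdd zero hadd neg a b := by
  by_cases h : a = neg b
  · rw [pA_eq_univ ha hb h]; trivial
  · rw [pA_eq_union ha hb h]; right; left; rfl

private lemma pA_comm (hF : IsHyperfield zero one hadd neg mul) (a b : F) :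
    primeAdd zero hadd neg a b = primeAdd zero hadd neg b a := by
  by_cases h0 : a = zero ∨ b = zero
  · rw [pA_eq_hadd h0, pA_eq_hadd (Or.symm h0)]; exact hF.hadd_comm a b
  · push_neg at h0
    by_cases h : a = neg b
    · rw [pA_eq_univ h0.1 h0.2 h, pA_eq_univ h0.2 h0.1 (neg_symm hF h)]
    · have h' : b ≠ neg a := fun hb => h (neg_symm hF hb)
      rw [pA_eq_union h0.1 h0.2 h, pA_eq_union h0.2 h0.1 h',
        hF.hadd_comm a b, Set.pair_comm]

private lemma mem_pA_self_right (hF : IsHyperfield zero one hadd neg mul) {a b : F}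
    (ha : a ≠ zero) (hb : b ≠ zero) : b ∈ primeAdd zero hadd neg a b := by
  rw [pA_comm hF]; exact mem_pA_self_left hF hb ha

end Aux

section Assoc

variable {F : Type*} {zero one : F} {hadd : F → F → Set F} {neg : F → F} {mul : F → F → F}

private lemma swapEnds (hF : IsHyperfield zero one hadd neg mul) (a b c : F) :
    (⋃ x ∈ primeAdd zero hadd neg a b, primeAdd zero hadd neg x c) ⊆
      ⋃ x ∈ primeAdd zero hadd neg c b, primeAdd zero hadd neg x a := by
  intro y hy
  simp only [Set.mem_iUnion, exists_prop] at hy ⊢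
  obtain ⟨x, hx, hy⟩ := hy
  by_cases ha : a = zero
  · subst ha
    rw [pA_eq_hadd (Or.inl rfl), zero_hadd' hF] at hx
    rw [Set.mem_singleton_iff] at hx; subst hx
    refine ⟨y, ?_, ?_⟩
    · rw [pA_comm hF]; exact hy
    · rw [pA_eq_hadd (Or.inr rfl), hF.hadd_zero]; rfl
  by_cases hb : b = zero
  · subst hb
    rw [pA_eq_hadd (Or.inr rfl), hF.hadd_zero, Set.mem_singleton_iff] at hx
    subst hx
    refine ⟨c, ?_, ?_⟩
    · rw [pA_eq_hadd (Or.inr rfl), hF.hadd_zero]; rfl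
    · rw [pA_comm hF]; exact hy
  by_cases hc : c = zero
  · subst hc
    rw [pA_eq_hadd (Or.inr rfl), hF.hadd_zero, Set.mem_singleton_iff] at hy
    subst hy
    refine ⟨b, ?_, ?_⟩
    · rw [pA_eq_hadd (Or.inl rfl), zero_hadd' hF]; rfl
    · rw [pA_comm hF]; exact hx
  -- now a, b, c all nonzero
  by_cases hcb : c = neg b
  · exact ⟨neg a, by rw [pA_eq_univ hc hb hcb]; trivial,
      by rw [pA_eq_univ (neg_ne_zero' hF ha) ha rfl]; trivial⟩
  by_cases hab : a = neg b
  · refine ⟨b, mem_pA_self_right hF hc hb, ?_⟩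
    rw [pA_eq_univ hb ha (neg_symm hF hab)]; trivial
  -- a ≠ neg b, so pA a b = hadd a b ∪ {a, b}
  rw [pA_eq_union ha hb hab] at hx
  rcases hx with hx | hx
  · -- x ∈ hadd a b
    by_cases hxc : x = neg c
    · -- then neg a ∈ hadd b c, and pA (neg a) a = univ
      have h1 : b ∈ hadd x (neg a) := hF.exchange x a b hx
      have h2 : neg a ∈ hadd b (neg x) := hF.exchange b x (neg a) h1
      rw [hxc, negneg hF] at h2
      refine ⟨neg a, hadd_subset_pA hF c b (by rwa [hF.hadd_comm]), ?_⟩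
      rw [pA_eq_univ (neg_ne_zero' hF ha) ha rfl]; trivial
    · have hx0 : x ≠ zero := by
        intro h0; subst h0
        exact hab (neg_symm hF (eq_neg_of_zero_mem hF hx))
      rw [pA_eq_union hx0 hc hxc] at hy
      rcases hy with hy | hy
      · -- y ∈ hadd x c
        have hmem : y ∈ ⋃ z ∈ hadd a b, hadd z c := Set.mem_biUnion hx hy
        rw [hF.hadd_assoc] at hmem
        simp only [Set.mem_iUnion, exists_prop] at hmem
        obtain ⟨w, hw, hyw⟩ := hmem
        refine ⟨w, hadd_subset_pA hF c b (by rwa [hF.hadd_comm]), ?_⟩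
        exact hadd_subset_pA hF w a (by rwa [hF.hadd_comm])
      · rcases hy with hy | hy
        · -- y = x ∈ hadd a b
          rw [hy]
          exact ⟨b, mem_pA_self_right hF hc hb,
            hadd_subset_pA hF b a (by rwa [hF.hadd_comm])⟩
        · -- y = c
          rw [Set.mem_singleton_iff] at hy; rw [hy]
          exact ⟨c, mem_pA_self_left hF hc hb, mem_pA_self_left hF hc ha⟩
  · rcases hx with hx | hx
    · -- x = a
      rw [hx] at hy
      exact ⟨c, mem_pA_self_left hF hc hb, by rwa [pA_comm hF]⟩
    · -- x = b
      rw [Set.mem_singleton_iff] at hx; rw [hx] at hy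
      have hbc : b ≠ neg c := fun h => hcb (neg_symm hF h)
      rw [pA_eq_union hb hc hbc] at hy
      rcases hy with hy | hy
      · -- y ∈ hadd b c
        have hy0 : y ≠ zero := by
          intro h0; subst h0
          exact hcb (eq_neg_of_zero_mem hF hy)
        exact ⟨y, hadd_subset_pA hF c b (by rwa [hF.hadd_comm]),
          mem_pA_self_left hF hy0 ha⟩
      · rcases hy with hy | hy
        · rw [hy]
          exact ⟨b, mem_pA_self_right hF hc hb, mem_pA_self_left hF hb ha⟩
        · rw [Set.mem_singleton_iff] at hy; rw [hy]
          exact ⟨c, mem_pA_self_left hF hc hb, mem_pA_self_left hF hc ha⟩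

private lemma pA_assoc (hF : IsHyperfield zero one hadd neg mul) (a b c : F) :
    (⋃ x ∈ primeAdd zero hadd neg a b, primeAdd zero hadd neg x c) =
      ⋃ x ∈ primeAdd zero hadd neg b c, primeAdd zero hadd neg a x := by
  have key : (⋃ x ∈ primeAdd zero hadd neg a b, primeAdd zero hadd neg x c) =
      ⋃ x ∈ primeAdd zero hadd neg c b, primeAdd zero hadd neg x a :=
    Set.Subset.antisymm (swapEnds hF a b c) (swapEnds hF c b a)
  rw [key, pA_comm hF c b]
  exact Set.iUnion₂_congr fun x _ => pA_comm hF x a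

end Assoc

private lemma pA_nonempty {F : Type*} {zero one : F} {hadd : F → F → Set F} {neg : F → F}
    {mul : F → F → F} (hF : IsHyperfield zero one hadd neg mul) (a b : F) :
    (primeAdd zero hadd neg a b).Nonempty := by
  by_cases h0 : a = zero ∨ b = zero
  · rw [pA_eq_hadd h0]; exact hF.hadd_nonempty a b
  · push_neg at h0
    by_cases h : a = neg b
    · rw [pA_eq_univ h0.1 h0.2 h]; exact ⟨zero, trivial⟩
    · rw [pA_eq_union h0.1 h0.2 h]
      exact (hF.hadd_nonempty a b).mono Set.subset_union_left

/-- For any hyperfield `(F, 0, +, −, 1, ·)`, the modified addition `+'` again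
makes `(F, 0, +', −, 1, ·)` a hyperfield. -/
theorem stmt_13 {F : Type*} (zero one : F) (hadd : F → F → Set F)
    (neg : F → F) (mul : F → F → F)
    (hF : IsHyperfield zero one hadd neg mul) :
    IsHyperfield zero one (primeAdd zero hadd neg) neg mul := by
  refine
  { hadd_nonempty := pA_nonempty hF
    hadd_comm := pA_comm hF
    hadd_zero := fun a => by rw [pA_eq_hadd (Or.inr rfl)]; exact hF.hadd_zero a
    hadd_assoc := pA_assoc hF
    zero_mem_sub := ?_
    exchange := ?_
    mul_assoc' := hF.mul_assoc'
    mul_comm' := hF.mul_comm'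
    one_mul' := hF.one_mul'
    zero_mul' := hF.zero_mul'
    distrib := ?_
    one_ne_zero' := hF.one_ne_zero'
    exists_inv := hF.exists_inv }
  · -- zero_mem_sub
    intro a
    by_cases ha : a = zero
    · rw [ha, pA_eq_hadd (Or.inl rfl)]; exact hF.zero_mem_sub zero
    · rw [pA_eq_univ ha (neg_ne_zero' hF ha) (negneg hF a).symm]; trivial
  · -- exchange
    intro a b c h
    by_cases hb : b = zero
    · rw [hb] at h
      rw [pA_eq_hadd (Or.inl rfl), zero_hadd' hF, Set.mem_singleton_iff] at h
      rw [hb, negzero hF, pA_eq_hadd (Or.inr rfl), hF.hadd_zero, h]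
      rfl
    by_cases hc : c = zero
    · rw [hc] at h
      rw [pA_eq_hadd (Or.inr rfl), hF.hadd_zero, Set.mem_singleton_iff] at h
      rw [hc, h, pA_eq_univ hb (neg_ne_zero' hF hb) (negneg hF b).symm]; trivial
    by_cases hbc : b = neg c
    · have hnb : neg b = c := by rw [hbc, negneg hF]
      rw [hnb]
      by_cases haz : a = zero
      · rw [haz, pA_eq_hadd (Or.inl rfl), zero_hadd' hF]; rfl
      · exact mem_pA_self_right hF haz hc
    · rw [pA_eq_union hb hc hbc] at h
      rcases h with h | h | h
      · exact hadd_subset_pA hF a (neg b) (hF.exchange a b c h)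
      · rw [h, pA_eq_univ hb (neg_ne_zero' hF hb) (negneg hF b).symm]; trivial
      · rw [Set.mem_singleton_iff] at h
        rw [h]
        exact mem_pA_self_left hF hc (neg_ne_zero' hF hb)
  · -- distrib
    intro a b c
    by_cases ha : a = zero
    · rw [ha]
      have himg : mul zero '' (primeAdd zero hadd neg b c) = {zero} := by
        obtain ⟨w, hw⟩ := pA_nonempty hF b c
        ext y
        simp only [Set.mem_image, Set.mem_singleton_iff]
        constructor
        · rintro ⟨x, -, rfl⟩; exact hF.zero_mul' x
        · rintro rfl; exact ⟨w, hw, hF.zero_mul' w⟩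
      rw [himg, hF.zero_mul' b, hF.zero_mul' c, pA_eq_hadd (Or.inl rfl), zero_hadd' hF]
    · obtain ⟨ai, hai⟩ := hF.exists_inv a ha
      have hmzero : ∀ x : F, mul x zero = zero := fun x => by
        rw [hF.mul_comm' x zero, hF.zero_mul']
      have hcancel : ∀ x y : F, mul a x = mul a y → x = y := by
        intro x y h
        have h2 : mul ai (mul a x) = mul ai (mul a y) := by rw [h]
        rwa [← hF.mul_assoc', ← hF.mul_assoc', hF.mul_comm' ai a, hai,
          hF.one_mul', hF.one_mul'] at h2
      have hne : ∀ x : F, x ≠ zero → mul a x ≠ zero := by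
        intro x hx h
        exact hx (hcancel x zero (by rw [h, hmzero]))
      have hmulneg : ∀ x : F, mul a (neg x) = neg (mul a x) := by
        intro x
        have h0 : zero ∈ hadd (mul a x) (mul a (neg x)) := by
          rw [← hF.distrib]
          exact ⟨zero, hF.zero_mem_sub x, hmzero a⟩
        exact eq_neg_of_zero_mem hF h0
      have hsurj : Function.Surjective (mul a) := fun y =>
        ⟨mul ai y, by rw [← hF.mul_assoc', hai, hF.one_mul']⟩
      by_cases hb : b = zero
      · rw [hb, pA_eq_hadd (Or.inl rfl), pA_eq_hadd (Or.inl (hmzero a))]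
        exact hF.distrib a zero c
      by_cases hc : c = zero
      · rw [hc, pA_eq_hadd (Or.inr rfl), pA_eq_hadd (Or.inr (hmzero a))]
        exact hF.distrib a b zero
      by_cases hbc : b = neg c
      · rw [pA_eq_univ hb hc hbc,
          pA_eq_univ (hne b hb) (hne c hc) (by rw [hbc, hmulneg]),
          Set.image_univ]
        exact Set.range_eq_univ.mpr hsurj
      · have hab : mul a b ≠ neg (mul a c) := fun h =>
          hbc (hcancel b (neg c) (by rw [h, hmulneg]))
        rw [pA_eq_union hb hc hbc, pA_eq_union (hne b hb) (hne c hc) hab,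
          Set.image_union, hF.distrib, Set.image_pair]
end

section
/- Let (R, ≤, 0, +, −, ·, 1) be a presentable field. Defining multivalued addition on the set S_R of supercompacts by a ∈ b + c iff a ≤ b + c (in R), the structure (S_R, 0, +, −, 1, ·) is a hyperfield. -/
/-- A presentable ring: a presentable group with a compatible commutative
monoid multiplication (with supercompact identity `one`) distributing over
addition and satisfying `S_{ab} = {st | s ∈ S_a, t ∈ S_b}`. -/
structure IsPresentableRing (R : Type*) [PartialOrder R]
    (zero : R) (add : R → R → R) (neg : R → R)
    (one : R) (mul : R → R → R) : Prop where
  toGroup : IsPresentableGroup R zero add neg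
  mul_assoc' : ∀ a b c : R, mul (mul a b) c = mul a (mul b c)
  mul_comm' : ∀ a b : R, mul a b = mul b a
  one_mul' : ∀ a : R, mul one a = a
  one_min : IsMin one
  one_ne_zero' : one ≠ zero
  mul_mono : ∀ a b c d : R, a ≤ b → c ≤ d → mul a c ≤ mul b d
  mul_neg' : ∀ a b : R, mul a (neg b) = neg (mul a b)
  mul_add' : ∀ a b c : R, mul a (add b c) = add (mul a b) (mul a c)
  scpt_mul : ∀ a b : R, Scpt (mul a b) = {z | ∃ s ∈ Scpt a, ∃ t ∈ Scpt b, z = mul s t}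

/-- A presentable field: a presentable ring in which the nonzero supercompacts
form a multiplicative group. -/
structure IsPresentableField (R : Type*) [PartialOrder R]
    (zero : R) (add : R → R → R) (neg : R → R)
    (one : R) (mul : R → R → R) : Prop where
  toRing : IsPresentableRing R zero add neg one mul
  mul_ne_zero' : ∀ a b : R, IsMin a → a ≠ zero → IsMin b → b ≠ zero → mul a b ≠ zero
  exists_inv : ∀ a : R, IsMin a → a ≠ zero → ∃ b : R, IsMin b ∧ b ≠ zero ∧ mul a b = one
theorem neg_mono_of_presentable {G : Type*} [PartialOrder G] {zero : G}
    {add : G → G → G} {neg : G → G} (h : IsPresentableGroup G zero add neg)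
    {u v : G} (huv : u ≤ v) : neg u ≤ neg v := by
  have hlub : IsLUB {u, v} v := by
    constructor
    · rintro x (rfl | rfl)
      · exact huv
      · exact le_rfl
    · intro c hc
      exact hc (Set.mem_insert_of_mem _ rfl)
  have hl := h.neg_lub {u, v} ⟨u, Set.mem_insert _ _⟩ v hlub
  exact hl.1 ⟨u, Set.mem_insert _ _, rfl⟩

/-- The negation of a supercompact is a supercompact. -/
theorem isMin_neg {G : Type*} [PartialOrder G] {zero : G}
    {add : G → G → G} {neg : G → G} (h : IsPresentableGroup G zero add neg)
    {a : G} (ha : IsMin a) : IsMin (neg a) := by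
  intro y hy
  have h1 : neg y ≤ neg (neg a) := neg_mono_of_presentable h hy
  rw [h.neg_neg'] at h1
  have h2 : a ≤ neg y := ha h1
  have h3 : neg a ≤ neg (neg y) := neg_mono_of_presentable h h2
  rwa [h.neg_neg'] at h3

/-- The product of supercompacts is a supercompact. -/
theorem isMin_mul {R : Type*} [PartialOrder R] {zero : R} {add : R → R → R}
    {neg : R → R} {one : R} {mul : R → R → R}
    (h : IsPresentableRing R zero add neg one mul)
    {a b : R} (ha : IsMin a) (hb : IsMin b) : IsMin (mul a b) := by
  have hm : mul a b ∈ Scpt (mul a b) := by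
    rw [h.scpt_mul]
    exact ⟨a, ⟨ha, le_rfl⟩, b, ⟨hb, le_rfl⟩, rfl⟩
  exact hm.1
section Aux

variable {R : Type*} [PartialOrder R] {zero : R} {add : R → R → R} {neg : R → R}
  {one : R} {mul : R → R → R}

theorem scpt_nonempty_s18 (h : WeaklyPresentable R) (x : R) : (Scpt x).Nonempty := by
  by_contra hne
  rw [Set.not_nonempty_iff_eq_empty] at hne
  have hl := h.2 x
  rw [hne] at hl
  have hxmin : IsMin x := fun y _ => hl.2 (by simp [upperBounds])
  have hmem : x ∈ Scpt x := ⟨hxmin, le_rfl⟩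
  rw [hne] at hmem
  exact hmem

theorem scpt_of_min {a : R} (ha : IsMin a) : Scpt a = {a} := by
  ext s
  constructor
  · rintro ⟨hs, hsa⟩
    exact le_antisymm hsa (ha hsa)
  · rintro rfl
    exact ⟨ha, le_rfl⟩

theorem pair_lub {u v : R} (huv : u ≤ v) : IsLUB ({u, v} : Set R) v := by
  constructor
  · rintro x (rfl | rfl)
    · exact huv
    · exact le_rfl
  · intro c hc
    exact hc (Set.mem_insert_of_mem _ rfl)

theorem add_mono (M : IsPresentableMonoid R zero add) {a b c d : R}
    (hab : a ≤ b) (hcd : c ≤ d) : add a c ≤ add b d := by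
  have hl := M.add_lub {a, b} {c, d} ⟨a, Set.mem_insert _ _⟩ ⟨c, Set.mem_insert _ _⟩
    b d (pair_lub hab) (pair_lub hcd)
  exact hl.1 ⟨a, Set.mem_insert _ _, c, Set.mem_insert _ _, rfl⟩

theorem mem_add_iff (M : IsPresentableMonoid R zero add) {s : R} (hs : IsMin s)
    (x y : R) : s ≤ add x y ↔ ∃ p ∈ Scpt x, ∃ q ∈ Scpt y, s ≤ add p q := by
  constructor
  · intro hsl
    obtain ⟨p0, hp0⟩ := scpt_nonempty_s18 M.pres.weakly x
    obtain ⟨q0, hq0⟩ := scpt_nonempty_s18 M.pres.weakly y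
    have hl := M.add_lub (Scpt x) (Scpt y) ⟨p0, hp0⟩ ⟨q0, hq0⟩ x y
      (M.pres.weakly.2 x) (M.pres.weakly.2 y)
    have hne : ({z | ∃ p ∈ Scpt x, ∃ q ∈ Scpt y, z = add p q} : Set R).Nonempty :=
      ⟨add p0 q0, p0, hp0, q0, hq0, rfl⟩
    obtain ⟨z, ⟨p, hp, q, hq, rfl⟩, hsz⟩ :=
      M.pres.min_compact s hs _ hne _ hl hsl
    exact ⟨p, hp, q, hq, hsz⟩
  · rintro ⟨p, hp, q, hq, hsz⟩
    exact le_trans hsz (add_mono M hp.2 hq.2)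

theorem mem_add_min_right (M : IsPresentableMonoid R zero add) {s c : R}
    (hs : IsMin s) (hc : IsMin c) (d : R) :
    s ≤ add d c ↔ ∃ x : R, IsMin x ∧ x ≤ d ∧ s ≤ add x c := by
  constructor
  · intro hsl
    obtain ⟨p, hp, q, hq, hsz⟩ := (mem_add_iff M hs d c).mp hsl
    rw [scpt_of_min hc] at hq
    rcases hq with rfl
    exact ⟨p, hp.1, hp.2, hsz⟩
  · rintro ⟨x, _, hxd, hsx⟩
    exact le_trans hsx (add_mono M hxd le_rfl)

theorem neg_zero_eq (G : IsPresentableGroup R zero add neg) : neg zero = zero := by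
  have h0 : zero ≤ add zero zero := by rw [G.toMonoid.zero_add']
  have h1 := G.exchange zero zero zero G.toMonoid.pres.basepoint_min
    G.toMonoid.pres.basepoint_min G.toMonoid.pres.basepoint_min h0
  rw [G.toMonoid.zero_add'] at h1
  exact le_antisymm (isMin_neg G G.toMonoid.pres.basepoint_min h1) h1

theorem mul_zero_eq (h : IsPresentableRing R zero add neg one mul) {t : R}
    (ht : IsMin t) : mul t zero = zero := by
  set x := mul t zero with hx
  have hxmin : IsMin x := isMin_mul h ht h.toGroup.toMonoid.pres.basepoint_min
  have h0 : x ≤ add zero x := by rw [h.toGroup.toMonoid.zero_add']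
  have h1 := h.toGroup.exchange x zero x hxmin
    h.toGroup.toMonoid.pres.basepoint_min hxmin h0
  have hnx : neg x = x := by
    rw [hx, ← h.mul_neg', neg_zero_eq h.toGroup]
  rw [hnx] at h1
  have hxx : add x x = x := by
    rw [hx, ← h.mul_add', h.toGroup.toMonoid.zero_add']
  rw [hxx] at h1
  exact le_antisymm (hxmin h1) h1

end Aux

/-- For a presentable field `R`, the set `S_R` of supercompacts with
multivalued addition `a ∈ b + c ⟺ a ≤ b + c` (in `R`) is a hyperfield. -/
theorem stmt_18 {R : Type*} [PartialOrder R] (zero : R) (add : R → R → R)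
    (neg : R → R) (one : R) (mul : R → R → R)
    (h : IsPresentableField R zero add neg one mul) :
    IsHyperfield (F := {a : R // IsMin a})
      ⟨zero, h.toRing.toGroup.toMonoid.pres.basepoint_min⟩
      ⟨one, h.toRing.one_min⟩
      (fun b c => {s : {a : R // IsMin a} | s.1 ≤ add b.1 c.1})
      (fun a => ⟨neg a.1, isMin_neg h.toRing.toGroup a.2⟩)
      (fun a b => ⟨mul a.1 b.1, isMin_mul h.toRing a.2 b.2⟩) := by
  have M := h.toRing.toGroup.toMonoid
  have G := h.toRing.toGroup
  constructor
  · -- hadd_nonempty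
    intro a b
    obtain ⟨s, hs⟩ := scpt_nonempty_s18 M.pres.weakly (add a.1 b.1)
    exact ⟨⟨s, hs.1⟩, hs.2⟩
  · -- hadd_comm
    intro a b
    ext s
    simp only [Set.mem_setOf_eq, M.add_comm' a.1 b.1]
  · -- hadd_zero
    intro a
    ext s
    simp only [Set.mem_setOf_eq, Set.mem_singleton_iff]
    rw [M.add_comm', M.zero_add']
    constructor
    · intro hsa
      exact Subtype.ext (le_antisymm hsa (a.2 hsa))
    · rintro rfl
      exact le_rfl
  · -- hadd_assoc
    intro a b c
    ext s
    simp only [Set.mem_iUnion, Set.mem_setOf_eq]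
    constructor
    · rintro ⟨x, hx, hs⟩
      have h1 : s.1 ≤ add a.1 (add b.1 c.1) := by
        rw [M.add_assoc']
        exact le_trans hs (add_mono M hx le_rfl)
      rw [M.add_comm'] at h1
      obtain ⟨y, hy, hya, hsy⟩ := (mem_add_min_right M s.2 a.2 _).mp h1
      refine ⟨⟨y, hy⟩, hya, ?_⟩
      rwa [M.add_comm'] at hsy
    · rintro ⟨y, hy, hs⟩
      have h1 : s.1 ≤ add (add a.1 b.1) c.1 := by
        rw [← M.add_assoc']
        exact le_trans hs (add_mono M le_rfl hy)
      obtain ⟨x, hx, hxa, hsx⟩ := (mem_add_min_right M s.2 c.2 _).mp h1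
      exact ⟨⟨x, hx⟩, hxa, hsx⟩
  · -- zero_mem_sub
    intro a
    have h0 : a.1 ≤ add zero a.1 := by rw [M.zero_add']
    exact G.exchange a.1 zero a.1 a.2 M.pres.basepoint_min a.2 h0
  · -- exchange
    intro a b c hmem
    simp only [Set.mem_setOf_eq] at hmem ⊢
    rw [M.add_comm'] at hmem
    exact G.exchange a.1 c.1 b.1 a.2 c.2 b.2 hmem
  · -- mul_assoc'
    intro a b c
    exact Subtype.ext (h.toRing.mul_assoc' a.1 b.1 c.1)
  · -- mul_comm'
    intro a b
    exact Subtype.ext (h.toRing.mul_comm' a.1 b.1)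
  · -- one_mul'
    intro a
    exact Subtype.ext (h.toRing.one_mul' a.1)
  · -- zero_mul'
    intro a
    refine Subtype.ext (show mul zero a.1 = zero from ?_)
    rw [h.toRing.mul_comm']
    exact mul_zero_eq h.toRing a.2
  · -- distrib
    intro a b c
    ext t
    simp only [Set.mem_image, Set.mem_setOf_eq]
    have key : t.1 ≤ add (mul a.1 b.1) (mul a.1 c.1) ↔
        t.1 ∈ Scpt (mul a.1 (add b.1 c.1)) := by
      rw [h.toRing.mul_add']
      exact ⟨fun ht => ⟨t.2, ht⟩, fun ht => ht.2⟩
    constructor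
    · rintro ⟨x, hx, rfl⟩
      simp only
      rw [key, h.toRing.scpt_mul]
      exact ⟨a.1, ⟨a.2, le_rfl⟩, x.1, ⟨x.2, hx⟩, rfl⟩
    · intro ht
      rw [key, h.toRing.scpt_mul] at ht
      obtain ⟨p, hp, q, hq, htpq⟩ := ht
      have hpa : p = a.1 := le_antisymm hp.2 (a.2 hp.2)
      refine ⟨⟨q, hq.1⟩, hq.2, ?_⟩
      exact (Subtype.ext (by rw [htpq, hpa])).symm
  · -- one_ne_zero'
    intro heq
    exact h.toRing.one_ne_zero' (congrArg Subtype.val heq)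
  · -- exists_inv
    intro a ha
    have ha' : a.1 ≠ zero := fun hz => ha (Subtype.ext hz)
    obtain ⟨b, hb, _, hab⟩ := h.exists_inv a.1 a.2 ha'
    exact ⟨⟨b, hb⟩, Subtype.ext hab⟩
end
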